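/- arXiv:1506.01726 — 3 statements merged into one kernel-verified Lean document; each statement's English description precedes it below -/
import Mathlib

section
/- For any Gauss diagram D of a virtual knot or link, the reduced virtual knot group Ḡ_D is isomorphic to the extended group EG_D, via the change of variables sending v to s and each short-arc generator a of Ḡ_D to the element a' s, where a' denotes the corresponding short-arc generator of EG_D (i.e. a' = a v⁻¹). -/
/-!
The substitution `a ↦ a s` (short arcs), `v ↦ s` is an automorphism of the free group on
the common generating set, with inverse `a ↦ a s⁻¹`. It carries each defining relator of
`Ḡ_D` literally onto the corresponding relator of `EG_D`: for instance
`d s (s b s s⁻¹)⁻¹ = d (s b s⁻¹)⁻¹` and `c s (b s s⁻¹ a s s s⁻¹ b⁻¹)⁻¹ = c (b a s b⁻¹ s⁻¹)⁻¹`.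
An automorphism of a free group mapping one set of relators onto another descends to an
isomorphism of the presented groups.
-/

noncomputable section

open scoped Classical

/-- A Gauss diagram: a finite set of chords, each with an arrowhead (`Sum.inl c`,
the under-crossing passage) and an arrowtail (`Sum.inr c`, the over-crossing passage)
and a sign (`true` = +1, `false` = −1); the endpoints are arranged on a disjoint
union of oriented circles, recorded by the successor permutation `next`. -/
structure GaussDiagram where
  Chord : Type
  [chordFintype : Fintype Chord]
  [chordDecEq : DecidableEq Chord]
  next : Equiv.Perm (Chord ⊕ Chord)
  sign : Chord → Bool

attribute [instance] GaussDiagram.chordFintype GaussDiagram.chordDecEq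

namespace GaussDiagram

variable (D : GaussDiagram)

/-- Endpoints of the diagram; `Sum.inl c` is the arrowhead of `c`, `Sum.inr c` its arrowtail. -/
abbrev Endpoint : Type := D.Chord ⊕ D.Chord

/-- Short arcs, indexed by their terminal endpoint: the arc `x` runs from the
preceding endpoint to the endpoint `x`. -/
abbrev Arc : Type := D.Endpoint

def head (c : D.Chord) : D.Endpoint := Sum.inl c
def tail (c : D.Chord) : D.Endpoint := Sum.inr c

/-- incoming under-crossing short arc at a chord -/
def ui (c : D.Chord) : D.Arc := Sum.inl c
/-- outgoing under-crossing short arc at a chord -/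
def uo (c : D.Chord) : D.Arc := D.next (Sum.inl c)
/-- incoming over-crossing short arc at a chord -/
def oi (c : D.Chord) : D.Arc := Sum.inr c
/-- outgoing over-crossing short arc at a chord -/
def oo (c : D.Chord) : D.Arc := D.next (Sum.inr c)

/-- the sign of a chord, as an integer -/
def sgn (c : D.Chord) : ℤ := if D.sign c then 1 else -1

/-! ### The reduced virtual knot group -/

/-- Generators of the reduced virtual knot group: one generator for each short arc,
together with the extra generator `v = Sum.inr ()`. -/
abbrev RGen : Type := D.Arc ⊕ Unit

/-- the generator `v` -/
def gv : FreeGroup D.RGen := FreeGroup.of (Sum.inr ())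
/-- the generator of a short arc -/
def ga (x : D.Arc) : FreeGroup D.RGen := FreeGroup.of (Sum.inl x)

/-- Relator at the over passage of a chord: for a positive chord with incoming over-arc
`b = oi` and outgoing over-arc `d = oo`, the relation `d = v b v⁻¹`; for a negative chord
the same with incoming and outgoing arcs interchanged. -/
def redRelOver (c : D.Chord) : FreeGroup D.RGen :=
  if D.sign c then
    D.ga (D.oo c) * (D.gv * D.ga (D.oi c) * (D.gv)⁻¹)⁻¹
  else
    D.ga (D.oi c) * (D.gv * D.ga (D.oo c) * (D.gv)⁻¹)⁻¹

/-- Relator at the under passage of a chord: for a positive chord with incoming under-arc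
`a = ui`, incoming over-arc `b = oi`, outgoing under-arc `c = uo`, the relation
`c = b v⁻¹ a v b⁻¹`; for a negative chord the same with incoming and outgoing arcs
interchanged. -/
def redRelUnder (c : D.Chord) : FreeGroup D.RGen :=
  if D.sign c then
    D.ga (D.uo c) *
      (D.ga (D.oi c) * (D.gv)⁻¹ * D.ga (D.ui c) * D.gv * (D.ga (D.oi c))⁻¹)⁻¹
  else
    D.ga (D.ui c) *
      (D.ga (D.oo c) * (D.gv)⁻¹ * D.ga (D.uo c) * D.gv * (D.ga (D.oo c))⁻¹)⁻¹

def redRels : Set (FreeGroup D.RGen) :=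
  {r | ∃ c : D.Chord, r = D.redRelOver c ∨ r = D.redRelUnder c}

/-- The reduced virtual knot group `Ḡ_D` of a Gauss diagram. -/
def RedGroup : Type := PresentedGroup D.redRels

instance : Group D.RedGroup := inferInstanceAs (Group (PresentedGroup D.redRels))

/-- the image of a generator in the reduced virtual knot group -/
def redOf (x : D.RGen) : D.RedGroup := PresentedGroup.of x

/-! ### The extended group -/

/-- Generators of the extended group: one for each short arc, plus `s = Sum.inr ()`. -/
abbrev EGen : Type := D.Arc ⊕ Unit

def es : FreeGroup D.EGen := FreeGroup.of (Sum.inr ())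
def ea (x : D.Arc) : FreeGroup D.EGen := FreeGroup.of (Sum.inl x)

/-- Relator of the extended group at the over passage of a chord: `d = s b s⁻¹`
(incoming and outgoing arcs interchanged for negative chords). -/
def extRelOver (c : D.Chord) : FreeGroup D.EGen :=
  if D.sign c then
    D.ea (D.oo c) * (D.es * D.ea (D.oi c) * (D.es)⁻¹)⁻¹
  else
    D.ea (D.oi c) * (D.es * D.ea (D.oo c) * (D.es)⁻¹)⁻¹

/-- Relator of the extended group at the under passage of a chord: `c = b a s b⁻¹ s⁻¹`
(incoming and outgoing arcs interchanged for negative chords). -/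
def extRelUnder (c : D.Chord) : FreeGroup D.EGen :=
  if D.sign c then
    D.ea (D.uo c) *
      (D.ea (D.oi c) * D.ea (D.ui c) * D.es * (D.ea (D.oi c))⁻¹ * (D.es)⁻¹)⁻¹
  else
    D.ea (D.ui c) *
      (D.ea (D.oo c) * D.ea (D.uo c) * D.es * (D.ea (D.oo c))⁻¹ * (D.es)⁻¹)⁻¹

def extRels : Set (FreeGroup D.EGen) :=
  {r | ∃ c : D.Chord, r = D.extRelOver c ∨ r = D.extRelUnder c}

/-- The extended group `EG_D` of Silver–Williams. -/
def ExtGroup : Type := PresentedGroup D.extRels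

instance : Group D.ExtGroup := inferInstanceAs (Group (PresentedGroup D.extRels))

def extOf (x : D.EGen) : D.ExtGroup := PresentedGroup.of x

end GaussDiagram

namespace PresentedGroup

variable {α β : Type*} {rels : Set (FreeGroup α)} {rels' : Set (FreeGroup β)}

def congr (e : FreeGroup α ≃* FreeGroup β) (he : e '' rels = rels') :
    PresentedGroup rels ≃* PresentedGroup rels' :=
  QuotientGroup.congr _ _ e <| he ▸ Subgroup.map_normalClosure rels e.toMonoidHom e.surjective

@[simp]
lemma congr_of (e : FreeGroup α ≃* FreeGroup β) (he : e '' rels = rels') (x : α) :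
    congr e he (of x) = mk rels' (e (FreeGroup.of x)) :=
  rfl

end PresentedGroup

namespace FreeGroup

variable (α : Type*)

def mulInrEquiv : FreeGroup (α ⊕ Unit) ≃* FreeGroup (α ⊕ Unit) :=
  MonoidHom.toMulEquiv
    (lift (Sum.elim (fun x => of (.inl x) * of (.inr ())) (fun _ => of (.inr ()))))
    (lift (Sum.elim (fun x => of (.inl x) * (of (.inr ()))⁻¹) (fun _ => of (.inr ()))))
    (by ext (_ | _) <;> simp)
    (by ext (_ | _) <;> simp)

variable {α}

@[simp]
lemma mulInrEquiv_of_inl (x : α) :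
    mulInrEquiv α (of (.inl x)) = of (.inl x) * of (.inr ()) := by
  simp [mulInrEquiv]

@[simp]
lemma mulInrEquiv_of_inr (u : Unit) : mulInrEquiv α (of (.inr u)) = of (.inr ()) := by
  simp [mulInrEquiv]

end FreeGroup

namespace GaussDiagram

variable (D : GaussDiagram)

lemma mulInrEquiv_redRelOver (c : D.Chord) :
    FreeGroup.mulInrEquiv D.Arc (D.redRelOver c) = D.extRelOver c := by
  unfold redRelOver extRelOver
  cases D.sign c <;>
    simp only [Bool.false_eq_true, ↓reduceIte, ga, gv, ea, es, map_mul, map_inv,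
      FreeGroup.mulInrEquiv_of_inl, FreeGroup.mulInrEquiv_of_inr] <;>
    group

lemma mulInrEquiv_redRelUnder (c : D.Chord) :
    FreeGroup.mulInrEquiv D.Arc (D.redRelUnder c) = D.extRelUnder c := by
  unfold redRelUnder extRelUnder
  cases D.sign c <;>
    simp only [Bool.false_eq_true, ↓reduceIte, ga, gv, ea, es, map_mul, map_inv,
      FreeGroup.mulInrEquiv_of_inl, FreeGroup.mulInrEquiv_of_inr] <;>
    group

lemma mulInrEquiv_image_redRels : FreeGroup.mulInrEquiv D.Arc '' D.redRels = D.extRels := by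
  ext r
  simp only [redRels, extRels, Set.mem_image, Set.mem_ofPred_eq]
  constructor
  · rintro ⟨_, ⟨c, rfl | rfl⟩, rfl⟩
    exacts [⟨c, .inl (D.mulInrEquiv_redRelOver c)⟩, ⟨c, .inr (D.mulInrEquiv_redRelUnder c)⟩]
  · rintro ⟨c, rfl | rfl⟩
    exacts [⟨_, ⟨c, .inl rfl⟩, D.mulInrEquiv_redRelOver c⟩,
      ⟨_, ⟨c, .inr rfl⟩, D.mulInrEquiv_redRelUnder c⟩]

def redGroupEquivExtGroup : D.RedGroup ≃* D.ExtGroup :=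
  PresentedGroup.congr _ D.mulInrEquiv_image_redRels

lemma redGroupEquivExtGroup_redOf_inr :
    D.redGroupEquivExtGroup (D.redOf (.inr ())) = D.extOf (.inr ()) :=
  (PresentedGroup.congr_of _ _ _).trans
    (congrArg (PresentedGroup.mk _) (FreeGroup.mulInrEquiv_of_inr ()))

lemma redGroupEquivExtGroup_redOf_inl (x : D.Arc) :
    D.redGroupEquivExtGroup (D.redOf (.inl x)) = D.extOf (.inl x) * D.extOf (.inr ()) :=
  ((PresentedGroup.congr_of _ _ _).trans
    (congrArg (PresentedGroup.mk _) (FreeGroup.mulInrEquiv_of_inl x))).trans (map_mul _ _ _)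

end GaussDiagram

/-- For any Gauss diagram `D`, the reduced virtual knot group is
isomorphic to the extended group, via the change of variables sending `v` to `s` and
each short-arc generator `a` to `a' s`. -/
theorem redGroup_iso_extGroup (D : GaussDiagram) :
    ∃ φ : D.RedGroup ≃* D.ExtGroup,
      φ (D.redOf (Sum.inr ())) = D.extOf (Sum.inr ()) ∧
      ∀ x : D.Arc, φ (D.redOf (Sum.inl x)) =
        D.extOf (Sum.inl x) * D.extOf (Sum.inr ()) :=
  ⟨D.redGroupEquivExtGroup, D.redGroupEquivExtGroup_redOf_inr,
    D.redGroupEquivExtGroup_redOf_inl⟩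
end
end

section
/- For any Gauss diagram D of a virtual knot or link, the generalized Alexander polynomial and the reduced virtual Alexander polynomial are related by G_D(s, t) = H̄_D(st, s) up to multiplication by a unit of ℤ[s^{±1}, t^{±1}]; that is, there exist integers a, b and a sign ± such that G_D(s, t) = ± s^a t^b · H̄_D(st, s). -/
/-!
The substitution `a ↦ s a` on every short-arc generator, `v ↦ s`, carries the relator of
`Ḡ_D` at each outgoing arc to `s r̃ s⁻¹`, where `r̃` is the relator of `EG_D` at that arc.
Evaluated at `a ↦ t`, `s ↦ s`, the substitution realises `t ↦ st`, `v ↦ s`, and each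
`∂(s a)/∂a_j` is `s δ_{a, a_j}`; so the chain rule for Fox derivatives gives
`s · ∂r̃/∂a_j = ∂r/∂a_j(st, s) · s`. Cancelling the unit `s`, the Jacobian of `EG_D` is the
image of that of `Ḡ_D`, and `G_D(s, t) = H̄_D(st, s)` holds on the nose.
-/

noncomputable section

open scoped Classical

def FoxPair (R : Type) [CommRing R] : Type := Rˣ × R

namespace FoxPair

variable {R : Type} [CommRing R]

instance : Mul (FoxPair R) := ⟨fun a b => (a.1 * b.1, a.2 + (a.1 : R) * b.2)⟩
instance : One (FoxPair R) := ⟨(1, 0)⟩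
instance : Inv (FoxPair R) := ⟨fun a => (a.1⁻¹, -(((a.1⁻¹ : Rˣ) : R) * a.2))⟩

@[simp] lemma mul_def (a b : FoxPair R) :
    a * b = (a.1 * b.1, a.2 + (a.1 : R) * b.2) := rfl
@[simp] lemma one_def : (1 : FoxPair R) = ((1 : Rˣ), (0 : R)) := rfl
@[simp] lemma inv_def (a : FoxPair R) :
    a⁻¹ = (a.1⁻¹, -(((a.1⁻¹ : Rˣ) : R) * a.2)) := rfl

instance : Group (FoxPair R) where
  mul_assoc a b c := by
    show ((a.1 * b.1) * c.1, (a.2 + (a.1 : R) * b.2) + ((a.1 * b.1 : Rˣ) : R) * c.2) =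
      (a.1 * (b.1 * c.1), a.2 + (a.1 : R) * (b.2 + (b.1 : R) * c.2))
    simp [Prod.ext_iff, Units.val_mul, mul_assoc, mul_add, add_assoc]
  one_mul a := by
    show ((1 : Rˣ) * a.1, (0 : R) + ((1 : Rˣ) : R) * a.2) = (a.1, a.2)
    simp [Prod.ext_iff]
  mul_one a := by
    show (a.1 * 1, a.2 + (a.1 : R) * 0) = (a.1, a.2)
    simp [Prod.ext_iff]
  inv_mul_cancel a := by
    show (a.1⁻¹ * a.1, -(((a.1⁻¹ : Rˣ) : R) * a.2) + ((a.1⁻¹ : Rˣ) : R) * a.2) = ((1 : Rˣ), (0 : R))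
    simp [Prod.ext_iff]

end FoxPair

def foxHom {α : Type} [DecidableEq α] {R : Type} [CommRing R] (φ : α → Rˣ) (x : α) :
    FreeGroup α →* FoxPair R :=
  FreeGroup.lift fun y => ((φ y, if y = x then (1 : R) else 0) : FoxPair R)

/-- The Fox derivative `∂w/∂x`, evaluated under the evaluation `φ` of the generators. -/
def fox {α : Type} [DecidableEq α] {R : Type} [CommRing R] (φ : α → Rˣ) (x : α)
    (w : FreeGroup α) : R :=
  (foxHom φ x w).2

abbrev LaurentTwo : Type := MonoidAlgebra ℤ (Multiplicative (ℤ × ℤ))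

def LaurentTwo.unitOf : Multiplicative (ℤ × ℤ) →* LaurentTwoˣ :=
  (MonoidAlgebra.of ℤ (Multiplicative (ℤ × ℤ))).toHomUnits

def LaurentTwo.U1 : LaurentTwoˣ := LaurentTwo.unitOf (Multiplicative.ofAdd (1, 0))
def LaurentTwo.U2 : LaurentTwoˣ := LaurentTwo.unitOf (Multiplicative.ofAdd (0, 1))

def LaurentTwo.mono (a b : ℤ) : LaurentTwo :=
  MonoidAlgebra.of ℤ (Multiplicative (ℤ × ℤ)) (Multiplicative.ofAdd (a, b))

def expHom {R : Type} [CommRing R] (a b : Rˣ) : Multiplicative (ℤ × ℤ) →* R where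
  toFun g := ((a ^ (Multiplicative.toAdd g).1 * b ^ (Multiplicative.toAdd g).2 : Rˣ) : R)
  map_one' := by simp
  map_mul' x y := by
    simp only [toAdd_mul, Prod.fst_add, Prod.snd_add, zpow_add, Units.val_mul]
    ring

/-- the ring homomorphism `ℤ[t^{±1}, v^{±1}] → R` sending `t ↦ a` and `v ↦ b` -/
def ringEval {R : Type} [CommRing R] (a b : Rˣ) : LaurentTwo →+* R :=
  ((MonoidAlgebra.lift ℤ R (Multiplicative (ℤ × ℤ))) (expHom a b)).toRingHom

namespace GaussDiagram

variable (D : GaussDiagram)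

/-- The relator of the reduced virtual knot group expressing the short arc `x` as the
outgoing arc of the unique crossing passage where it originates.  If `x` is the
outgoing under-arc of a chord `c` (i.e. `x = uo c`) the relation is
`uo = oi · v⁻¹ · ui · v · oi⁻¹` for a positive chord and
`uo = v · oo⁻¹ · ui · oo · v⁻¹` for a negative one; if `x` is the outgoing over-arc
(`x = oo c`) it is `oo = v · oi · v⁻¹` for a positive chord and `oo = v⁻¹ · oi · v`
for a negative one. -/
def redRowRel (x : D.Arc) : FreeGroup D.RGen :=
  match D.next.symm x with
  | Sum.inl c =>
      if D.sign c then
        D.ga x * (D.ga (D.oi c) * (D.gv)⁻¹ * D.ga (D.ui c) * D.gv * (D.ga (D.oi c))⁻¹)⁻¹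
      else
        D.ga x * (D.gv * (D.ga (D.oo c))⁻¹ * D.ga (D.ui c) * D.ga (D.oo c) * (D.gv)⁻¹)⁻¹
  | Sum.inr c =>
      if D.sign c then
        D.ga x * (D.gv * D.ga (D.oi c) * (D.gv)⁻¹)⁻¹
      else
        D.ga x * ((D.gv)⁻¹ * D.ga (D.oi c) * D.gv)⁻¹

/-- evaluation of the generators of the reduced group: every short arc generator is
sent to `t` and `v` is sent to `v` -/
def redEval : D.RGen → LaurentTwoˣ :=
  Sum.elim (fun _ => LaurentTwo.U1) (fun _ => LaurentTwo.U2)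

/-- the Fox–Jacobian matrix of the reduced virtual knot group with respect to the
short-arc generators -/
def redMatrix : Matrix D.Arc D.Arc LaurentTwo :=
  fun i j => fox D.redEval (Sum.inl j) (D.redRowRel i)

/-- The reduced virtual Alexander polynomial `H̄_D(t, v)`. -/
def HbarPoly : LaurentTwo := D.redMatrix.det

/-- The relator of the extended group expressing the short arc `x` as the outgoing arc
of the unique crossing passage where it originates. -/
def extRowRel (x : D.Arc) : FreeGroup D.EGen :=
  match D.next.symm x with
  | Sum.inl c =>
      if D.sign c then
        D.ea x * (D.ea (D.oi c) * D.ea (D.ui c) * D.es * (D.ea (D.oi c))⁻¹ * (D.es)⁻¹)⁻¹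
      else
        D.ea x * ((D.ea (D.oo c))⁻¹ * D.ea (D.ui c) * D.es * D.ea (D.oo c) * (D.es)⁻¹)⁻¹
  | Sum.inr c =>
      if D.sign c then
        D.ea x * (D.es * D.ea (D.oi c) * (D.es)⁻¹)⁻¹
      else
        D.ea x * ((D.es)⁻¹ * D.ea (D.oi c) * D.es)⁻¹

/-- evaluation of the generators of the extended group: every short arc generator is
sent to `t` (the second variable) and `s` is sent to `s` (the first variable) -/
def extEval : D.EGen → LaurentTwoˣ :=
  Sum.elim (fun _ => LaurentTwo.U2) (fun _ => LaurentTwo.U1)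

def extMatrix : Matrix D.Arc D.Arc LaurentTwo :=
  fun i j => fox D.extEval (Sum.inl j) (D.extRowRel i)

/-- The generalized Alexander polynomial `G_D(s, t)`. -/
def GPoly : LaurentTwo := D.extMatrix.det

end GaussDiagram

namespace LaurentTwo

lemma mono_zero : mono 0 0 = 1 := by
  rw [mono, Prod.mk_zero_zero, ofAdd_zero, map_one]

lemma val_U1 : ((U1 : LaurentTwoˣ) : LaurentTwo) = mono 1 0 := rfl

lemma val_U2 : ((U2 : LaurentTwoˣ) : LaurentTwo) = mono 0 1 := rfl

lemma ringEval_mono {R : Type} [CommRing R] (a b : Rˣ) (m n : ℤ) :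
    ringEval a b (mono m n) = ((a ^ m * b ^ n : Rˣ) : R) := by
  simp [ringEval, mono, expHom]

lemma ringEval_U1 {R : Type} [CommRing R] (a b : Rˣ) : ringEval a b (U1 : LaurentTwo) = a := by
  simpa [val_U1] using ringEval_mono a b 1 0

lemma ringEval_U2 {R : Type} [CommRing R] (a b : Rˣ) : ringEval a b (U2 : LaurentTwo) = b := by
  simpa [val_U2] using ringEval_mono a b 0 1

end LaurentTwo

section Fox

variable {α β : Type} [DecidableEq α] [DecidableEq β] {R S : Type} [CommRing R] [CommRing S]

lemma foxHom_of (φ : α → Rˣ) (x y : α) :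
    foxHom φ x (FreeGroup.of y) = ((φ y, if y = x then (1 : R) else 0) : FoxPair R) :=
  FreeGroup.lift_apply_of

lemma foxHom_fst (φ : α → Rˣ) (x : α) (w : FreeGroup α) :
    (foxHom φ x w).1 = FreeGroup.lift φ w := by
  induction w with
  | C1 => rfl
  | of y => simp [foxHom_of]
  | inv_of y _ => rw [map_inv, foxHom_of, map_inv, FreeGroup.lift_apply_of]; rfl
  | mul u w hu hw => simp [hu, hw]

@[simp] lemma fox_one (φ : α → Rˣ) (x : α) : fox φ x (1 : FreeGroup α) = (0 : R) := by
  simp [fox]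

@[simp] lemma fox_of (φ : α → Rˣ) (x y : α) :
    fox φ x (FreeGroup.of y) = if y = x then (1 : R) else 0 := by
  simp [fox, foxHom_of]

@[simp] lemma fox_mul (φ : α → Rˣ) (x : α) (u w : FreeGroup α) :
    fox φ x (u * w) = fox φ x u + ((FreeGroup.lift φ u : Rˣ) : R) * fox φ x w := by
  simp [fox, foxHom_fst]

@[simp] lemma fox_inv (φ : α → Rˣ) (x : α) (w : FreeGroup α) :
    fox φ x w⁻¹ = -((((FreeGroup.lift φ w)⁻¹ : Rˣ) : R)) * fox φ x w := by
  simp [fox, foxHom_fst, neg_mul]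

lemma map_fox (ρ : R →+* S) (φ : α → Rˣ) (x : α) (w : FreeGroup α) :
    ρ (fox φ x w) = fox (Units.map (ρ : R →* S) ∘ φ) x w := by
  have hlift (u : FreeGroup α) :
      Units.map (ρ : R →* S) (FreeGroup.lift φ u) =
        FreeGroup.lift (Units.map (ρ : R →* S) ∘ φ) u :=
    FreeGroup.lift_unique ((Units.map (ρ : R →* S)).comp (FreeGroup.lift φ)) (by simp)
  induction w with
  | C1 => simp
  | of y => simp [apply_ite ρ]
  | inv_of y _ => simp [apply_ite ρ, ← hlift]
  | mul u w hu hw => simp [hu, hw, ← hlift]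

/-- The chain rule for Fox derivatives. -/
theorem fox_lift [Fintype α] (g : α → FreeGroup β) (ψ : β → Rˣ) (x : β) (w : FreeGroup α) :
    fox ψ x (FreeGroup.lift g w) = ∑ y, fox (FreeGroup.lift ψ ∘ g) y w * fox ψ x (g y) := by
  have hlift (u : FreeGroup α) :
      FreeGroup.lift ψ (FreeGroup.lift g u) = FreeGroup.lift (FreeGroup.lift ψ ∘ g) u :=
    FreeGroup.lift_unique ((FreeGroup.lift ψ).comp (FreeGroup.lift g)) (by simp)
  induction w with
  | C1 => simp
  | of y => simp
  | inv_of y _ => simp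
  | mul u w hu hw =>
    simp [hu, hw, hlift, add_mul, Finset.sum_add_distrib, Finset.mul_sum, mul_assoc]

end Fox

namespace GaussDiagram

variable (D : GaussDiagram)

local notation "σ" => ringEval (LaurentTwo.U1 * LaurentTwo.U2) LaurentTwo.U1

def arcShift : D.RGen → FreeGroup D.EGen :=
  Sum.elim (fun x => D.es * D.ea x) fun _ => D.es

lemma lift_arcShift_redRowRel (x : D.Arc) :
    FreeGroup.lift D.arcShift (D.redRowRel x) = D.es * D.extRowRel x * D.es⁻¹ := by
  unfold redRowRel extRowRel
  split <;> split <;> simp [arcShift, ga, gv] <;> group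

lemma lift_extEval_comp_arcShift :
    FreeGroup.lift D.extEval ∘ D.arcShift =
      Units.map (σ : LaurentTwo →* LaurentTwo) ∘ D.redEval := by
  funext y
  rcases y with x | ⟨⟩ <;> ext <;>
    simp [arcShift, es, ea, extEval, redEval, LaurentTwo.ringEval_U1, LaurentTwo.ringEval_U2]

lemma fox_extEval_arcShift (j : D.Arc) (y : D.RGen) :
    fox D.extEval (Sum.inl j) (D.arcShift y) =
      if y = Sum.inl j then (LaurentTwo.U1 : LaurentTwo) else 0 := by
  rcases y with x | ⟨⟩ <;> simp [arcShift, es, ea, extEval]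

lemma extMatrix_eq_map_redMatrix : D.extMatrix = RingHom.mapMatrix σ D.redMatrix := by
  refine Matrix.ext fun i j => ?_
  rw [RingHom.mapMatrix_apply, Matrix.map_apply]
  refine LaurentTwo.U1.isUnit.mul_left_cancel ?_
  calc (LaurentTwo.U1 : LaurentTwo) * D.extMatrix i j
      = fox D.extEval (Sum.inl j) (D.es * D.extRowRel i * D.es⁻¹) := by
        simp [extMatrix, es, extEval]
    _ = fox (FreeGroup.lift D.extEval ∘ D.arcShift) (Sum.inl j) (D.redRowRel i) *
          LaurentTwo.U1 := by
        rw [← lift_arcShift_redRowRel, fox_lift]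
        simp [fox_extEval_arcShift]
    _ = LaurentTwo.U1 * σ (D.redMatrix i j) := by
        rw [lift_extEval_comp_arcShift, redMatrix, map_fox, mul_comm]

end GaussDiagram

/-- `G_D(s, t) = H̄_D(st, s)` up to multiplication by a unit
`± s^a t^b` of `ℤ[s^{±1}, t^{±1}]`. -/
theorem gPoly_eq_hbarPoly (D : GaussDiagram) :
    ∃ (a b : ℤ) (z : ℤˣ),
      D.GPoly = ((z : ℤ) : LaurentTwo) * LaurentTwo.mono a b *
        ringEval (LaurentTwo.U1 * LaurentTwo.U2) LaurentTwo.U1 D.HbarPoly := by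
  refine ⟨0, 0, 1, ?_⟩
  rw [GaussDiagram.GPoly, GaussDiagram.HbarPoly, D.extMatrix_eq_map_redMatrix, ← RingHom.map_det,
    LaurentTwo.mono_zero, Units.val_one, Int.cast_one, one_mul, one_mul]
end
end

section
/- Let D be a Gauss diagram of a virtual knot or link admitting an (integer-valued) Alexander numbering. Then the reduced virtual knot group Ḡ_D is isomorphic to the free product G_D * ℤ. -/
noncomputable section

open scoped Classical

namespace GaussDiagram

variable (D : GaussDiagram)

/-- A mod `p` Alexander numbering of a Gauss diagram (`p = 0` meaning integer valued,
  via `ZMod 0 = ℤ`): at each chord, if `a → c` is the passage of the strand crossed from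
  left to right by the other strand `b → d`, then `λ(a) = λ(d)` and
  `λ(b) = λ(c) = λ(a) − 1`.  For a positive chord the strand crossed from left to right
  is the over strand, for a negative chord it is the under strand. -/
def IsAlexanderNumbering (p : ℕ) (lam : D.Arc → ZMod p) : Prop :=
  ∀ c : D.Chord,
    if D.sign c then
      lam (D.oi c) = lam (D.uo c) ∧ lam (D.ui c) = lam (D.oo c) ∧
        lam (D.ui c) = lam (D.oi c) - 1
    else
      lam (D.ui c) = lam (D.oo c) ∧ lam (D.oi c) = lam (D.uo c) ∧
        lam (D.oi c) = lam (D.ui c) - 1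

/-! ### The knot group -/

/-- Two endpoints generate the same long arc when they are separated only by an
arrowtail: the short arc ending at an arrowtail and the following short arc belong to
the same long arc. -/
def tailRel : D.Endpoint → D.Endpoint → Prop :=
  fun x y => ∃ c : D.Chord, x = Sum.inr c ∧ y = D.next (Sum.inr c)

/-- Long arcs: maximal arcs between consecutive arrowheads, i.e. equivalence classes of
short arcs under merging across arrowtails. -/
def LongArc : Type := Quotient (Relation.EqvGen.setoid D.tailRel)

/-- the long arc containing a given short arc -/
def la (x : D.Endpoint) : D.LongArc := Quotient.mk _ x

/-- Wirtinger relator of a chord: `c = b^ε a b^{−ε}` where `a` is the incoming and `c`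
the outgoing long arc at the arrowhead, and `b` is the long arc through the arrowtail. -/
def knotRel (c : D.Chord) : FreeGroup D.LongArc :=
  FreeGroup.of (D.la (D.next (Sum.inl c))) *
    (FreeGroup.of (D.la (Sum.inr c)) ^ D.sgn c * FreeGroup.of (D.la (Sum.inl c)) *
        FreeGroup.of (D.la (Sum.inr c)) ^ (-D.sgn c))⁻¹

def knotRels : Set (FreeGroup D.LongArc) := Set.range D.knotRel

/-- The knot group `G_D` of a Gauss diagram (Wirtinger presentation on long arcs). -/
def KnotGroup : Type := PresentedGroup D.knotRels

instance : Group D.KnotGroup := inferInstanceAs (Group (PresentedGroup D.knotRels))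

end GaussDiagram

/-! Let `t` generate `ℤ` and let `λ` be the Alexander numbering. Conjugating the arc generators
of `Ḡ_D` by `v ^ λ x` turns its relations into the Wirtinger relations on short arcs: at a chord
of sign `ε` with incoming arcs `a, b` and outgoing arcs `c, d` we have `λ d = λ b - ε`,
`λ c = λ b` and `λ a = λ b - ε`, so `d = v^ε b v^{-ε}` becomes `[d] = [b]` and the under
relation becomes `[c] = [b]^ε [a] [b]^{-ε}`. Hence `[x] ↦ v^{λ x} a_x v^{-λ x}`, `t ↦ v` and
`a_x ↦ t^{-λ x} [x] t^{λ x}`, `v ↦ t` are well defined and mutually inverse. -/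

theorem PresentedGroup.lift_of_eq_one {α : Type*} {rels : Set (FreeGroup α)}
    {r : FreeGroup α} (hr : r ∈ rels) :
    FreeGroup.lift (PresentedGroup.of (rels := rels)) r = 1 := by
  rw [FreeGroup.ext_hom (FreeGroup.lift PresentedGroup.of) (PresentedGroup.mk rels)
    fun _ => FreeGroup.lift_apply_of]
  exact PresentedGroup.one_of_mem hr

namespace GaussDiagram

variable {D : GaussDiagram}

namespace IsAlexanderNumbering

variable {p : ℕ} {lam : D.Arc → ZMod p}

theorem oi_eq_uo (h : D.IsAlexanderNumbering p lam) (c : D.Chord) :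
    lam (D.oi c) = lam (D.uo c) := by
  have hc := h c
  split_ifs at hc
  exacts [hc.1, hc.2.1]

theorem ui_eq_oo (h : D.IsAlexanderNumbering p lam) (c : D.Chord) :
    lam (D.ui c) = lam (D.oo c) := by
  have hc := h c
  split_ifs at hc
  exacts [hc.2.1, hc.1]

theorem ui_eq_oi_sub_sgn (h : D.IsAlexanderNumbering p lam) (c : D.Chord) :
    lam (D.ui c) = lam (D.oi c) - D.sgn c := by
  have hc := h c
  by_cases hs : D.sign c <;> simp only [hs, sgn, if_true, if_false, Bool.false_eq_true] at hc ⊢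
  · simp [hc.2.2]
  · push_cast; rw [hc.2.2]; ring

end IsAlexanderNumbering

variable (D) {H : Type*} [Group H]

def IsWirtingerFamily (b : D.Arc → H) : Prop :=
  ∀ c, b (D.oo c) = b (D.oi c) ∧
    b (D.uo c) = b (D.oi c) ^ D.sgn c * b (D.ui c) * b (D.oi c) ^ (-D.sgn c)

/-- The relations of `Ḡ_D`; at a negative chord they are solved for the outgoing arcs, which
is equivalent to the relators (`isReducedFamily_iff_lift_eq_one`). -/
def IsReducedFamily (v : H) (a : D.Arc → H) : Prop :=
  ∀ c, a (D.oo c) = v ^ D.sgn c * a (D.oi c) * v ^ (-D.sgn c) ∧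
    a (D.uo c) = a (D.oi c) ^ D.sgn c * v ^ (-D.sgn c) * a (D.ui c) * v ^ D.sgn c *
      a (D.oi c) ^ (-D.sgn c)

variable {D}

theorem la_oo (c : D.Chord) : D.la (D.oo c) = D.la (D.oi c) :=
  (Quotient.sound (Relation.EqvGen.rel _ _ ⟨c, rfl, rfl⟩)).symm

theorem isWirtingerFamily_comp_la_iff_lift_eq_one (β : D.LongArc → H) :
    D.IsWirtingerFamily (β ∘ D.la) ↔ ∀ r ∈ D.knotRels, FreeGroup.lift β r = 1 := by
  simp only [knotRels, Set.forall_mem_range, knotRel, map_mul, map_inv, map_zpow,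
    FreeGroup.lift_apply_of, mul_inv_eq_one]
  exact forall_congr' fun c => and_iff_right (congrArg β (la_oo c))

theorem isReducedFamily_iff_lift_eq_one (f : D.RGen → H) :
    D.IsReducedFamily (f (Sum.inr ())) (f ∘ Sum.inl) ↔
      ∀ r ∈ D.redRels, FreeGroup.lift f r = 1 := by
  have hrels : (∀ r ∈ D.redRels, FreeGroup.lift f r = 1) ↔
      ∀ c, FreeGroup.lift f (D.redRelOver c) = 1 ∧ FreeGroup.lift f (D.redRelUnder c) = 1 := by
    constructor
    · exact fun H c => ⟨H _ ⟨c, .inl rfl⟩, H _ ⟨c, .inr rfl⟩⟩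
    · rintro H r ⟨c, rfl | rfl⟩
      exacts [(H c).1, (H c).2]
  rw [hrels]
  refine forall_congr' fun c => ?_
  by_cases hs : D.sign c <;>
    simp only [redRelOver, redRelUnder, sgn, ga, gv, hs, if_true, if_false, Bool.false_eq_true,
      map_mul, map_inv, FreeGroup.lift_apply_of, mul_inv_eq_one, zpow_one, zpow_neg_one,
      Function.comp_apply, Int.reduceNeg, neg_neg]
  generalize f (Sum.inr ()) = v, f (Sum.inl (D.oi c)) = b, f (Sum.inl (D.oo c)) = d,
    f (Sum.inl (D.ui c)) = x, f (Sum.inl (D.uo c)) = y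
  constructor <;> rintro ⟨rfl, rfl⟩ <;> constructor <;> group

theorem isReducedFamily_iff_isWirtingerFamily_conj {lam : D.Arc → ℤ}
    (h : D.IsAlexanderNumbering 0 lam) (v : H) (a : D.Arc → H) :
    D.IsReducedFamily v a ↔ D.IsWirtingerFamily fun x => v ^ lam x * a x * (v ^ lam x)⁻¹ := by
  refine forall_congr' fun c => and_congr ?_ ?_
  · have hoi : lam (D.oi c) = lam (D.oo c) + D.sgn c := by
      have h1 : lam (D.ui c) = lam (D.oi c) - D.sgn c := h.ui_eq_oi_sub_sgn c
      have h2 : lam (D.ui c) = lam (D.oo c) := h.ui_eq_oo c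
      omega
    rw [← (MulAut.conj (v ^ lam (D.oo c))).injective.eq_iff]
    congr! 1
    simp only [MulAut.conj_apply, hoi]
    group
  · have hoi : lam (D.oi c) = lam (D.uo c) := h.oi_eq_uo c
    have hui : lam (D.ui c) = lam (D.uo c) - D.sgn c := by
      have h1 : lam (D.ui c) = lam (D.oi c) - D.sgn c := h.ui_eq_oi_sub_sgn c
      omega
    rw [← (MulAut.conj (v ^ lam (D.uo c))).injective.eq_iff]
    congr! 1
    simp only [MulAut.conj_apply, conj_zpow, hoi, hui]
    group

theorem isReducedFamily_conj_iff_isWirtingerFamily {lam : D.Arc → ℤ}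
    (h : D.IsAlexanderNumbering 0 lam) (v : H) (b : D.Arc → H) :
    D.IsReducedFamily v (fun x => (v ^ lam x)⁻¹ * b x * v ^ lam x) ↔
      D.IsWirtingerFamily b := by
  rw [isReducedFamily_iff_isWirtingerFamily_conj h]
  simp only [mul_assoc, mul_inv_cancel, mul_one, mul_inv_cancel_left]

theorem IsWirtingerFamily.eq_of_eqvGen {b : D.Arc → H} (hb : D.IsWirtingerFamily b)
    {x y : D.Arc} (hxy : Relation.EqvGen D.tailRel x y) : b x = b y := by
  induction hxy with
  | rel x y hr =>
    obtain ⟨c, rfl, rfl⟩ := hr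
    exact (hb c).1.symm
  | refl => rfl
  | symm _ _ _ ih => exact ih.symm
  | trans _ _ _ _ _ ih₁ ih₂ => exact ih₁.trans ih₂

def IsWirtingerFamily.onLongArc {b : D.Arc → H} (hb : D.IsWirtingerFamily b) :
    D.LongArc → H :=
  Quotient.lift b fun _ _ => hb.eq_of_eqvGen

theorem IsWirtingerFamily.map {H' : Type*} [Group H'] {b : D.Arc → H}
    (hb : D.IsWirtingerFamily b) (φ : H →* H') : D.IsWirtingerFamily (φ ∘ b) := fun c => by
  simp only [Function.comp_apply, ← map_zpow, ← map_mul, (hb c).1, (hb c).2, and_self]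

def knotOf (L : D.LongArc) : D.KnotGroup := PresentedGroup.of L

theorem isWirtingerFamily_knotOf : D.IsWirtingerFamily fun x => knotOf (D.la x) :=
  (isWirtingerFamily_comp_la_iff_lift_eq_one _).2 fun _ => PresentedGroup.lift_of_eq_one

theorem isReducedFamily_redOf :
    D.IsReducedFamily (D.redOf (Sum.inr ())) (D.redOf ∘ Sum.inl) :=
  (isReducedFamily_iff_lift_eq_one _).2 fun _ => PresentedGroup.lift_of_eq_one

section Splitting

open Monoid

variable {lam : D.Arc → ℤ}

variable (D) in
def tGen : Coprod D.KnotGroup (Multiplicative ℤ) := Coprod.inr (Multiplicative.ofAdd 1)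

variable (D) in
def vGen : D.RedGroup := D.redOf (Sum.inr ())

variable (lam) in
def wirtingerGen (x : D.Arc) : D.RedGroup :=
  vGen D ^ lam x * D.redOf (Sum.inl x) * (vGen D ^ lam x)⁻¹

theorem isWirtingerFamily_wirtingerGen (h : D.IsAlexanderNumbering 0 lam) :
    D.IsWirtingerFamily (wirtingerGen lam) :=
  (isReducedFamily_iff_isWirtingerFamily_conj h _ _).1 isReducedFamily_redOf

def toCoprod (h : D.IsAlexanderNumbering 0 lam) :
    D.RedGroup →* Coprod D.KnotGroup (Multiplicative ℤ) :=
  PresentedGroup.toGroup (f := Sum.elim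
      (fun x => (tGen D ^ lam x)⁻¹ * Coprod.inl (knotOf (D.la x)) * tGen D ^ lam x)
      fun _ => tGen D) <|
    (isReducedFamily_iff_lift_eq_one _).1 <|
      (isReducedFamily_conj_iff_isWirtingerFamily h _ _).2 <|
        (isWirtingerFamily_knotOf (D := D)).map (Coprod.inl (N := Multiplicative ℤ))

def wirtingerHom (h : D.IsAlexanderNumbering 0 lam) : D.KnotGroup →* D.RedGroup :=
  PresentedGroup.toGroup <| (isWirtingerFamily_comp_la_iff_lift_eq_one
    (isWirtingerFamily_wirtingerGen h).onLongArc).1 (isWirtingerFamily_wirtingerGen h)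

def ofCoprod (h : D.IsAlexanderNumbering 0 lam) :
    Coprod D.KnotGroup (Multiplicative ℤ) →* D.RedGroup :=
  Coprod.lift (wirtingerHom h) (zpowersHom _ (vGen D))

theorem toCoprod_redOf_inl (h : D.IsAlexanderNumbering 0 lam) (x : D.Arc) :
    toCoprod h (D.redOf (Sum.inl x)) =
      (tGen D ^ lam x)⁻¹ * Coprod.inl (knotOf (D.la x)) * tGen D ^ lam x :=
  PresentedGroup.toGroup.of _

theorem toCoprod_vGen (h : D.IsAlexanderNumbering 0 lam) : toCoprod h (vGen D) = tGen D :=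
  PresentedGroup.toGroup.of _

theorem ofCoprod_inl_knotOf (h : D.IsAlexanderNumbering 0 lam) (x : D.Arc) :
    ofCoprod h (Coprod.inl (knotOf (D.la x))) = wirtingerGen lam x :=
  (Coprod.lift_apply_inl _ _ _).trans (PresentedGroup.toGroup.of _)

theorem ofCoprod_tGen (h : D.IsAlexanderNumbering 0 lam) : ofCoprod h (tGen D) = vGen D := by
  rw [ofCoprod, tGen, Coprod.lift_apply_inr, zpowersHom_apply, toAdd_ofAdd, zpow_one]

theorem ofCoprod_comp_toCoprod (h : D.IsAlexanderNumbering 0 lam) :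
    (ofCoprod h).comp (toCoprod h) = MonoidHom.id _ := by
  refine PresentedGroup.ext fun x => ?_
  rcases x with x | _
  · show ofCoprod h (toCoprod h (D.redOf (Sum.inl x))) = D.redOf (Sum.inl x)
    simp only [toCoprod_redOf_inl, map_mul, map_inv, map_zpow, ofCoprod_inl_knotOf,
      ofCoprod_tGen, wirtingerGen]
    group
  · exact (congrArg (ofCoprod h) (toCoprod_vGen h)).trans (ofCoprod_tGen h)

theorem toCoprod_comp_ofCoprod (h : D.IsAlexanderNumbering 0 lam) :
    (toCoprod h).comp (ofCoprod h) = MonoidHom.id _ := by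
  refine Coprod.hom_ext (PresentedGroup.ext fun L => ?_) (MonoidHom.ext_mint ?_)
  · induction L using Quotient.inductionOn
    show toCoprod h (ofCoprod h (Coprod.inl (knotOf (D.la _)))) = Coprod.inl (knotOf (D.la _))
    simp only [ofCoprod_inl_knotOf, wirtingerGen, map_mul, map_inv, map_zpow, toCoprod_redOf_inl,
      toCoprod_vGen]
    group
  · exact (congrArg (toCoprod h) (ofCoprod_tGen h)).trans (toCoprod_vGen h)

end Splitting

end GaussDiagram

/-- If a Gauss diagram admits an integral Alexander numbering then the
reduced virtual knot group splits as the free product `G_D * ℤ`. -/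
theorem redGroup_iso_of_almostClassical (D : GaussDiagram)
    (lam : D.Arc → ℤ) (h : D.IsAlexanderNumbering 0 lam) :
    Nonempty (D.RedGroup ≃* Monoid.Coprod D.KnotGroup (Multiplicative ℤ)) :=
  ⟨(D.toCoprod h).toMulEquiv (D.ofCoprod h) (D.ofCoprod_comp_toCoprod h)
    (D.toCoprod_comp_ofCoprod h)⟩
end
end
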